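/- arXiv:2206.13481 — 2 statements merged into one kernel-verified Lean document; each statement's English description precedes it below -/
import Mathlib

section
/- Fix a real α > 1, and let h : ℝ → ℝ be any function such that for every c > 1 one has 1 < h(c) < 1 + (c−1)/α and D(1/α ‖ (h(c)−1)/(c−1)) = ln(c)/α. Then h is differentiable at every point c > 1. Symmetrically, fix a real c > 1, and let g : ℝ → ℝ be any function such that for every α > 1 one has 1 < g(α) < 1 + (c−1)/α and D(1/α ‖ (g(α)−1)/(c−1)) = ln(c)/α. Then g is differentiable at every point α > 1. -/
/-- Kullback–Leibler divergence `D(a‖b) = a·ln(a/b) + (1−a)·ln((1−a)/(1−b))`.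
(The convention `0·ln 0 = 0` holds automatically since `Real.log 0 = 0`.) -/
noncomputable def klDiv (a b : ℝ) : ℝ :=
  a * Real.log (a / b) + (1 - a) * Real.log ((1 - a) / (1 - b))

/-!
For `a ∈ (0, 1)` the map `b ↦ D(a‖b)` has derivative `(b - a) / (b (1 - b))`, negative on `(0, a)`.
Hence `y ↦ D(1/α ‖ (y - 1)/(c - 1)) - ln c / α` is strictly decreasing, with nonvanishing
derivative, on `(1, 1 + (c - 1)/α)`. The implicit function theorem, applied to this C¹ residual
as a function of `(c, y)` or of `(α, y)`, gives a differentiable local solution, and strict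
monotonicity in `y` forces every solution `h` (resp. `g`), continuous or not, to coincide with it.
-/

open Filter Topology Set
open scoped ContDiff

section ImplicitFunction

variable {𝕜 : Type*} [NontriviallyNormedField 𝕜]
  {E₁ : Type*} [NormedAddCommGroup E₁] [NormedSpace 𝕜 E₁] [CompleteSpace E₁]
  {E₂ : Type*} [NormedAddCommGroup E₂] [NormedSpace 𝕜 E₂] [CompleteSpace E₂]
  {F : Type*} [NormedAddCommGroup F] [NormedSpace 𝕜 F] [CompleteSpace F]

/-- Injectivity on the fibres `s x` forces `h` to agree near `u.1` with the implicit function. -/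
theorem HasStrictFDerivAt.differentiableAt_of_eventually_apply_eq {f : E₁ × E₂ → F}
    {f' : E₁ × E₂ →L[𝕜] F} {u : E₁ × E₂} (hf : HasStrictFDerivAt f f' u)
    (hf₂ : (f' ∘L .inr 𝕜 E₁ E₂).IsInvertible) {s : E₁ → Set E₂}
    (hs : ∀ᶠ v in 𝓝 u, v.2 ∈ s v.1) (hinj : ∀ᶠ x in 𝓝 u.1, InjOn (fun y => f (x, y)) (s x))
    {h : E₁ → E₂} (hh : ∀ᶠ x in 𝓝 u.1, h x ∈ s x ∧ f (x, h x) = f u) :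
    DifferentiableAt 𝕜 h u.1 := by
  set ψ := hf.implicitFunctionOfProdDomain hf₂
  have hψ : Tendsto (fun x => (x, ψ x)) (𝓝 u.1) (𝓝 u) :=
    tendsto_id.prodMk_nhds (hf.tendsto_implicitFunctionOfProdDomain hf₂)
  have hψh : ψ =ᶠ[𝓝 u.1] h := by
    filter_upwards [hψ.eventually hs, hinj, hh,
      hf.eventually_apply_implicitFunctionOfProdDomain hf₂] with x hψs hinjx ⟨hhs, hhf⟩ hψf
    exact hinjx hψs hhs (hψf.trans hhf.symm)
  exact (hf.hasStrictFDerivAt_implicitFunctionOfProdDomain hf₂).differentiableAt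
    |>.congr_of_eventuallyEq hψh.symm

end ImplicitFunction

theorem ContinuousLinearMap.isInvertible_of_apply_one_ne_zero {𝕜 : Type*}
    [NontriviallyNormedField 𝕜] {L : 𝕜 →L[𝕜] 𝕜} (hL : L 1 ≠ 0) : L.IsInvertible :=
  .of_inverse (g := (L 1)⁻¹ • .id 𝕜 𝕜) (ext_ring (by simp [hL])) (ext_ring (by simp [hL]))

section KullbackLeibler

theorem hasDerivAt_klDiv {a b : ℝ} (ha₀ : a ≠ 0) (ha₁ : a ≠ 1) (hb₀ : b ≠ 0) (hb₁ : b ≠ 1) :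
    HasDerivAt (klDiv a) ((b - a) / (b * (1 - b))) b := by
  have ha₁' : 1 - a ≠ 0 := sub_ne_zero.2 ha₁.symm
  have hb₁' : 1 - b ≠ 0 := sub_ne_zero.2 hb₁.symm
  have hfirst : HasDerivAt (fun t => Real.log (a / t)) (-b⁻¹) b := by
    refine (((hasDerivAt_const b a).div (hasDerivAt_id' b) hb₀).log
      (div_ne_zero ha₀ hb₀)).congr_deriv ?_
    simp only [Pi.div_apply]
    field_simp
    ring
  have hsecond : HasDerivAt (fun t => Real.log ((1 - a) / (1 - t))) (1 - b)⁻¹ b := by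
    refine (((hasDerivAt_const b (1 - a)).div ((hasDerivAt_id' b).const_sub 1) hb₁').log
      (div_ne_zero ha₁' hb₁')).congr_deriv ?_
    simp only [Pi.div_apply]
    field_simp
    ring
  refine ((hfirst.const_mul a).add (hsecond.const_mul (1 - a))).congr_deriv ?_
  field_simp
  ring

theorem strictAntiOn_klDiv {a : ℝ} (ha₀ : 0 < a) (ha₁ : a < 1) :
    StrictAntiOn (klDiv a) (Ioc 0 a) := by
  have hderiv : ∀ b ∈ Ioc 0 a, HasDerivAt (klDiv a) ((b - a) / (b * (1 - b))) b :=
    fun b hb => hasDerivAt_klDiv ha₀.ne' ha₁.ne hb.1.ne' (hb.2.trans_lt ha₁).ne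
  refine strictAntiOn_of_deriv_neg (convex_Ioc 0 a)
    (fun b hb => (hderiv b hb).continuousAt.continuousWithinAt) fun b hb => ?_
  rw [interior_Ioc] at hb
  rw [(hderiv b (Ioo_subset_Ioc_self hb)).deriv]
  exact div_neg_of_neg_of_pos (sub_neg.2 hb.2) (mul_pos hb.1 (by linarith [hb.2]))

theorem ContDiffAt.klDiv {E : Type*} [NormedAddCommGroup E] [NormedSpace ℝ E] {n : ℕ∞ω}
    {A B : E → ℝ} {x : E} (hA : ContDiffAt ℝ n A x) (hB : ContDiffAt ℝ n B x)
    (hA₀ : A x ≠ 0) (hA₁ : A x ≠ 1) (hB₀ : B x ≠ 0) (hB₁ : B x ≠ 1) :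
    ContDiffAt ℝ n (fun x => klDiv (A x) (B x)) x := by
  have hA₁' : 1 - A x ≠ 0 := sub_ne_zero.2 hA₁.symm
  have hB₁' : 1 - B x ≠ 0 := sub_ne_zero.2 hB₁.symm
  exact (hA.mul ((hA.div hB hB₀).log (div_ne_zero hA₀ hB₀))).add
    ((contDiffAt_const.sub hA).mul
      (((contDiffAt_const.sub hA).div (contDiffAt_const.sub hB) hB₁').log
        (div_ne_zero hA₁' hB₁')))

end KullbackLeibler

section AmlsBound

/-- `amlsbound α c` is the unique zero of `amlsResidual α c` on `Ioo 1 (1 + (c - 1) / α)`. -/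
noncomputable def amlsResidual (a c y : ℝ) : ℝ :=
  klDiv (1 / a) ((y - 1) / (c - 1)) - Real.log c / a

variable {a c y : ℝ}

theorem one_div_mem_Ioo_of_one_lt (ha : 1 < a) : 1 / a ∈ Ioo 0 1 :=
  ⟨by positivity, (div_lt_one (by linarith)).2 ha⟩

theorem sub_one_div_sub_one_mem_Ioo (hc : 1 < c) (hy : y ∈ Ioo 1 (1 + (c - 1) / a)) :
    (y - 1) / (c - 1) ∈ Ioo 0 (1 / a) := by
  have hc₀ : 0 < c - 1 := by linarith
  refine ⟨div_pos (by linarith [hy.1]) hc₀, ?_⟩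
  rw [div_lt_iff₀ hc₀, div_mul_eq_mul_div, one_mul]
  linarith [hy.2]

theorem strictAntiOn_amlsResidual (ha : 1 < a) (hc : 1 < c) :
    StrictAntiOn (amlsResidual a c) (Ioo 1 (1 + (c - 1) / a)) := by
  intro y₁ hy₁ y₂ hy₂ hlt
  have hb₁ := sub_one_div_sub_one_mem_Ioo hc hy₁
  have hb₂ := sub_one_div_sub_one_mem_Ioo hc hy₂
  have hkl := strictAntiOn_klDiv (one_div_mem_Ioo_of_one_lt ha).1 (one_div_mem_Ioo_of_one_lt ha).2
    (Ioo_subset_Ioc_self hb₁) (Ioo_subset_Ioc_self hb₂)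
    (div_lt_div_of_pos_right (by linarith) (by linarith))
  exact sub_lt_sub_right hkl _

theorem exists_hasDerivAt_amlsResidual_neg (ha : 1 < a) (hc : 1 < c)
    (hy : y ∈ Ioo 1 (1 + (c - 1) / a)) : ∃ m < 0, HasDerivAt (amlsResidual a c) m y := by
  obtain ⟨hb₀, hba⟩ := sub_one_div_sub_one_mem_Ioo hc hy
  obtain ⟨ha₀, ha₁⟩ := one_div_mem_Ioo_of_one_lt ha
  have hc₀ : 0 < c - 1 := by linarith
  have hratio : HasDerivAt (fun y => (y - 1) / (c - 1)) (1 / (c - 1)) y := by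
    simpa using ((hasDerivAt_id y).sub_const 1).div_const (c - 1)
  refine ⟨_, mul_neg_of_neg_of_pos ?_ (by positivity),
    ((hasDerivAt_klDiv ha₀.ne' ha₁.ne hb₀.ne' (hba.trans ha₁).ne).comp y hratio).sub_const _⟩
  exact div_neg_of_neg_of_pos (sub_neg.2 hba) (mul_pos hb₀ (by linarith))

theorem ContDiffAt.amlsResidual {E : Type*} [NormedAddCommGroup E] [NormedSpace ℝ E] {n : ℕ∞ω}
    {A C Y : E → ℝ} {x : E} (hA : ContDiffAt ℝ n A x) (hC : ContDiffAt ℝ n C x)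
    (hY : ContDiffAt ℝ n Y x) (hA₁ : 1 < A x) (hC₁ : 1 < C x)
    (hYx : Y x ∈ Ioo 1 (1 + (C x - 1) / A x)) :
    ContDiffAt ℝ n (fun x => amlsResidual (A x) (C x) (Y x)) x := by
  obtain ⟨hb₀, hba⟩ := sub_one_div_sub_one_mem_Ioo hC₁ hYx
  obtain ⟨ha₀, ha₁⟩ := one_div_mem_Ioo_of_one_lt hA₁
  have hA₀ : A x ≠ 0 := by linarith
  exact ((contDiffAt_const.div hA hA₀).klDiv
      ((hY.sub contDiffAt_const).div (hC.sub contDiffAt_const) (by linarith))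
      ha₀.ne' ha₁.ne hb₀.ne' (hba.trans ha₁).ne).sub
    ((hC.log (by linarith)).div hA hA₀)

theorem differentiableAt_of_amlsResidual_eq_zero {A C h : ℝ → ℝ} {x₀ : ℝ}
    (hA : ContDiffAt ℝ 1 A x₀) (hC : ContDiffAt ℝ 1 C x₀) (hA₁ : 1 < A x₀) (hC₁ : 1 < C x₀)
    (hh : ∀ᶠ x in 𝓝 x₀, h x ∈ Ioo 1 (1 + (C x - 1) / A x) ∧ amlsResidual (A x) (C x) (h x) = 0) :
    DifferentiableAt ℝ h x₀ := by
  set F : ℝ × ℝ → ℝ := fun q => amlsResidual (A q.1) (C q.1) q.2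
  have hy₀ := hh.self_of_nhds
  have hF : ContDiffAt ℝ 1 F (x₀, h x₀) :=
    (hA.comp _ contDiffAt_fst).amlsResidual (hC.comp _ contDiffAt_fst) contDiffAt_snd hA₁ hC₁ hy₀.1
  have hF' := hF.hasStrictFDerivAt one_ne_zero
  obtain ⟨m, hm, hFy⟩ := exists_hasDerivAt_amlsResidual_neg hA₁ hC₁ hy₀.1
  have hpartial : fderiv ℝ F (x₀, h x₀) (0, 1) = m :=
    (hF'.hasFDerivAt.comp_hasDerivAt (h x₀)
      ((hasDerivAt_const (h x₀) x₀).prodMk (hasDerivAt_id (h x₀)))).unique hFy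
  refine hF'.differentiableAt_of_eventually_apply_eq (s := fun x => Ioo 1 (1 + (C x - 1) / A x))
    (ContinuousLinearMap.isInvertible_of_apply_one_ne_zero (by simpa [hpartial] using hm.ne))
    ?_ ?_ ?_
  · have hbound : ContinuousAt (fun v : ℝ × ℝ => 1 + (C v.1 - 1) / A v.1) (x₀, h x₀) :=
      continuousAt_const.add (((hC.continuousAt.comp_of_eq continuousAt_fst rfl).sub
        continuousAt_const).div (hA.continuousAt.comp_of_eq continuousAt_fst rfl) (by linarith))
    filter_upwards [continuousAt_const.eventually_lt continuousAt_snd hy₀.1.1,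
      continuousAt_snd.eventually_lt hbound hy₀.1.2] with v hv₁ hv₂
    exact ⟨hv₁, hv₂⟩
  · filter_upwards [hA.continuousAt.eventually (lt_mem_nhds hA₁),
      hC.continuousAt.eventually (lt_mem_nhds hC₁)] with x hAx hCx
    exact (strictAntiOn_amlsResidual hAx hCx).injOn
  · filter_upwards [hh] with x hx
    exact ⟨hx.1, hx.2.trans hy₀.2.symm⟩

end AmlsBound

/-- For fixed `α > 1`, any function `h` satisfying for all `c > 1` that
`1 < h(c) < 1 + (c−1)/α` and `D(1/α ‖ (h(c)−1)/(c−1)) = ln(c)/α` is differentiable at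
every `c > 1`; symmetrically, for fixed `c > 1`, any function `g` satisfying for all
`α > 1` that `1 < g(α) < 1 + (c−1)/α` and `D(1/α ‖ (g(α)−1)/(c−1)) = ln(c)/α` is
differentiable at every `α > 1`. -/
theorem stmt4 :
    (∀ α : ℝ, 1 < α → ∀ h : ℝ → ℝ,
      (∀ c : ℝ, 1 < c → (1 < h c ∧ h c < 1 + (c - 1) / α) ∧
        klDiv (1 / α) ((h c - 1) / (c - 1)) = Real.log c / α) →
      ∀ c : ℝ, 1 < c → DifferentiableAt ℝ h c) ∧
    (∀ c : ℝ, 1 < c → ∀ g : ℝ → ℝ,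
      (∀ α : ℝ, 1 < α → (1 < g α ∧ g α < 1 + (c - 1) / α) ∧
        klDiv (1 / α) ((g α - 1) / (c - 1)) = Real.log c / α) →
      ∀ α : ℝ, 1 < α → DifferentiableAt ℝ g α) := by
  refine ⟨fun α hα h H c hc => ?_, fun c hc g H α hα => ?_⟩
  · refine differentiableAt_of_amlsResidual_eq_zero contDiffAt_const contDiffAt_id hα hc ?_
    filter_upwards [eventually_gt_nhds hc] with x hx
    exact ⟨(H x hx).1, sub_eq_zero.2 (H x hx).2⟩
  · refine differentiableAt_of_amlsResidual_eq_zero contDiffAt_id contDiffAt_const hα hc ?_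
    filter_upwards [eventually_gt_nhds hα] with x hx
    exact ⟨(H x hx).1, sub_eq_zero.2 (H x hx).2⟩
end

section
/- Monotonicity of amlsbound: let α > 1 be real. (i) If 1 < c < c′ and γ, γ′ are reals with 1 < γ < 1 + (c−1)/α, D(1/α ‖ (γ−1)/(c−1)) = ln(c)/α, 1 < γ′ < 1 + (c′−1)/α and D(1/α ‖ (γ′−1)/(c′−1)) = ln(c′)/α, then γ < γ′. (ii) If c > 1 is real and 1 < α < α′, and γ, γ′ are reals with 1 < γ < 1 + (c−1)/α, D(1/α ‖ (γ−1)/(c−1)) = ln(c)/α, 1 < γ′ < 1 + (c−1)/α′ and D(1/α′ ‖ (γ′−1)/(c−1)) = ln(c)/α′, then γ′ < γ. -/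
open Real Set

lemma mul_log_div_eq (x : ℝ) {y : ℝ} (hy : y ≠ 0) : x * log (x / y) = x * (log x - log y) := by
  rcases eq_or_ne x 0 with rfl | hx
  · simp
  · rw [log_div hx hy]

lemma klDiv_eq_sub_log (a : ℝ) {b : ℝ} (hb₀ : b ≠ 0) (hb₁ : b ≠ 1) :
    klDiv a b = a * (log a - log b) + (1 - a) * (log (1 - a) - log (1 - b)) := by
  rw [klDiv, mul_log_div_eq a hb₀, mul_log_div_eq (1 - a) (sub_ne_zero.2 hb₁.symm)]

lemma hasDerivAt_klDiv_right (a : ℝ) {b : ℝ} (hb : b ∈ Ioo 0 1) :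
    HasDerivAt (klDiv a) ((b - a) / (b * (1 - b))) b := by
  have hb₀ : b ≠ 0 := hb.1.ne'
  have hb₁ : 1 - b ≠ 0 := sub_ne_zero.2 hb.2.ne'
  have hlog : HasDerivAt (fun x => a * (log a - log x) + (1 - a) * (log (1 - a) - log (1 - x)))
      (a * -b⁻¹ + (1 - a) * -(-1 / (1 - b))) b :=
    (((hasDerivAt_log hb₀).const_sub _).const_mul a).add
      ((((hasDerivAt_id b).const_sub 1).log hb₁).const_sub _ |>.const_mul (1 - a))
  refine (hlog.congr_deriv (by field_simp; ring)).congr_of_eventuallyEq ?_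
  filter_upwards [isOpen_Ioo.mem_nhds hb] with x hx
  exact klDiv_eq_sub_log a hx.1.ne' hx.2.ne

lemma klDiv_strictAntiOn {a : ℝ} (ha : a < 1) : StrictAntiOn (klDiv a) (Ioc 0 a) := by
  have hderiv : ∀ x ∈ Ioc 0 a, HasDerivAt (klDiv a) ((x - a) / (x * (1 - x))) x :=
    fun x hx => hasDerivAt_klDiv_right a ⟨hx.1, hx.2.trans_lt ha⟩
  refine strictAntiOn_of_deriv_neg (convex_Ioc 0 a)
    (fun x hx => (hderiv x hx).continuousAt.continuousWithinAt) fun x hx => ?_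
  rw [interior_Ioc] at hx
  rw [(hderiv x (Ioo_subset_Ioc_self hx)).deriv]
  exact div_neg_of_neg_of_pos (by linarith [hx.2]) (mul_pos hx.1 (by linarith [hx.2]))

lemma hasDerivAt_klDiv_div_left {a b : ℝ} (ha : a ∈ Ioo 0 1) (hb₀ : b ≠ 0) (hb₁ : b ≠ 1) :
    HasDerivAt (fun x => klDiv x b / x) ((log (1 - b) - log (1 - a)) / a ^ 2) a := by
  have ha₀ : a ≠ 0 := ha.1.ne'
  have ha₁ : 1 - a ≠ 0 := sub_ne_zero.2 ha.2.ne'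
  have hnum : HasDerivAt (fun x => x * (log x - log b) + (1 - x) * (log (1 - x) - log (1 - b)))
      (1 * (log a - log b) + a * a⁻¹ + ((-1) * (log (1 - a) - log (1 - b))
        + (1 - a) * (-1 / (1 - a)))) a :=
    ((hasDerivAt_id a).mul ((hasDerivAt_log ha₀).sub_const _)).add
      (((hasDerivAt_id a).const_sub 1).mul ((((hasDerivAt_id a).const_sub 1).log ha₁).sub_const _))
  refine ((hnum.div (hasDerivAt_id a) ha₀).congr_deriv ?_).congr_of_eventuallyEq
    (.of_forall fun x => by simp [klDiv_eq_sub_log x hb₀ hb₁])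
  simp only [id]
  field_simp
  ring

lemma klDiv_div_strictMonoOn {b : ℝ} (hb : 0 < b) :
    StrictMonoOn (fun a => klDiv a b / a) (Ico b 1) := by
  have hderiv : ∀ a ∈ Ico b 1,
      HasDerivAt (fun x => klDiv x b / x) ((log (1 - b) - log (1 - a)) / a ^ 2) a :=
    fun a ha => hasDerivAt_klDiv_div_left ⟨hb.trans_le ha.1, ha.2⟩ hb.ne' (ha.1.trans_lt ha.2).ne
  refine strictMonoOn_of_deriv_pos (convex_Ico b 1)
    (fun x hx => (hderiv x hx).continuousAt.continuousWithinAt) fun x hx => ?_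
  rw [interior_Ico] at hx
  rw [(hderiv x (Ioo_subset_Ico_self hx)).deriv]
  have hlog : log (1 - x) < log (1 - b) := log_lt_log (by linarith [hx.2]) (by linarith [hx.1])
  exact div_pos (by linarith) (pow_pos (hb.trans hx.1) 2)

/-- The `γ` determined by the ratio `b = (γ-1)/(c-1)` when `a = 1/α`: the defining equation
gives `c = exp (D(a‖b)/a)`. -/
noncomputable def amlsGamma (a b : ℝ) : ℝ := 1 + b * (exp (klDiv a b / a) - 1)

lemma exp_klDiv_div_lt {a b : ℝ} (hb : 0 < b) (hba : b < a) (ha : a < 1) :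
    exp (klDiv a b / a) < a * (1 - b) / (b * (1 - a)) := by
  have ha₀ : 0 < a := hb.trans hba
  have h₁a : 0 < 1 - a := by linarith
  have h₁b : 0 < 1 - b := by linarith
  rw [← exp_log (by positivity : 0 < a * (1 - b) / (b * (1 - a))), exp_lt_exp,
    klDiv_eq_sub_log a hb.ne' (hba.trans ha).ne, log_div (by positivity) (by positivity),
    log_mul ha₀.ne' h₁b.ne', log_mul hb.ne' h₁a.ne']
  have hlog : log (1 - a) < log (1 - b) := log_lt_log (by linarith) (by linarith)
  have hgap : log a + log (1 - b) - (log b + log (1 - a))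
      - (a * (log a - log b) + (1 - a) * (log (1 - a) - log (1 - b))) / a
      = (log (1 - b) - log (1 - a)) / a := by
    field_simp
    ring
  linarith [div_pos (sub_pos.2 hlog) ha₀]

lemma hasDerivAt_amlsGamma {a b : ℝ} (ha : a ≠ 0) (hb : b ∈ Ioo 0 1) :
    HasDerivAt (amlsGamma a)
      ((exp (klDiv a b / a) * (b * (1 - a)) - a * (1 - b)) / (a * (1 - b))) b := by
  have hK := (hasDerivAt_klDiv_right a hb).div_const a
  have h := ((hasDerivAt_id b).mul (hK.exp.sub_const 1)).const_add 1
  have hb₀ : b ≠ 0 := hb.1.ne'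
  have hb₁ : 1 - b ≠ 0 := sub_ne_zero.2 hb.2.ne'
  exact h.congr_deriv (by simp only [id]; field_simp; ring)

lemma amlsGamma_strictAntiOn {a : ℝ} (ha₀ : 0 < a) (ha₁ : a < 1) :
    StrictAntiOn (amlsGamma a) (Ioc 0 a) := by
  have hderiv : ∀ x ∈ Ioc 0 a, HasDerivAt (amlsGamma a)
      ((exp (klDiv a x / a) * (x * (1 - a)) - a * (1 - x)) / (a * (1 - x))) x :=
    fun x hx => hasDerivAt_amlsGamma ha₀.ne' ⟨hx.1, hx.2.trans_lt ha₁⟩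
  refine strictAntiOn_of_deriv_neg (convex_Ioc 0 a)
    (fun x hx => (hderiv x hx).continuousAt.continuousWithinAt) fun x hx => ?_
  rw [interior_Ioc] at hx
  obtain ⟨hx₀, hxa⟩ := hx
  rw [(hderiv x (Ioo_subset_Ioc_self ⟨hx₀, hxa⟩)).deriv]
  have hlt := exp_klDiv_div_lt hx₀ hxa ha₁
  rw [lt_div_iff₀ (mul_pos hx₀ (by linarith))] at hlt
  exact div_neg_of_neg_of_pos (by linarith) (mul_pos ha₀ (by linarith))

def IsAmlsBound (α c γ : ℝ) : Prop :=
  1 < γ ∧ γ < 1 + (c - 1) / α ∧ klDiv (1 / α) ((γ - 1) / (c - 1)) = log c / α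

namespace IsAmlsBound

variable {α c γ : ℝ}

lemma ratio_mem_Ioo (h : IsAmlsBound α c γ) (hα : 0 < α) (hc : 1 < c) :
    (γ - 1) / (c - 1) ∈ Ioo 0 (1 / α) := by
  have hc₁ : 0 < c - 1 := by linarith
  refine ⟨div_pos (by linarith [h.1]) hc₁, ?_⟩
  rw [div_lt_div_iff₀ hc₁ hα, one_mul, ← lt_div_iff₀ hα]
  linarith [h.2.1]

lemma klDiv_div_eq_log (h : IsAmlsBound α c γ) (hα : 0 < α) :
    klDiv (1 / α) ((γ - 1) / (c - 1)) / (1 / α) = log c := by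
  rw [h.2.2]
  field_simp

lemma amlsGamma_eq (h : IsAmlsBound α c γ) (hα : 0 < α) (hc : 1 < c) :
    amlsGamma (1 / α) ((γ - 1) / (c - 1)) = γ := by
  have hc₁ : c - 1 ≠ 0 := by linarith
  rw [amlsGamma, h.klDiv_div_eq_log hα, exp_log (by linarith), div_mul_cancel₀ _ hc₁]
  ring

lemma lt_of_c_lt {c' γ' : ℝ} (h : IsAmlsBound α c γ) (h' : IsAmlsBound α c' γ') (hα : 1 < α)
    (hc : 1 < c) (hcc' : c < c') : γ < γ' := by
  have hα₀ : 0 < α := by linarith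
  have ha₁ : 1 / α < 1 := (div_lt_one hα₀).2 hα
  have hc' : 1 < c' := hc.trans hcc'
  have hb := Ioo_subset_Ioc_self (h.ratio_mem_Ioo hα₀ hc)
  have hb' := Ioo_subset_Ioc_self (h'.ratio_mem_Ioo hα₀ hc')
  have hb'b : (γ' - 1) / (c' - 1) < (γ - 1) / (c - 1) := by
    refine ((klDiv_strictAntiOn ha₁).lt_iff_gt hb hb').1 ?_
    rw [h.2.2, h'.2.2]
    exact div_lt_div_of_pos_right (log_lt_log (by linarith) hcc') hα₀
  rw [← h.amlsGamma_eq hα₀ hc, ← h'.amlsGamma_eq hα₀ hc']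
  exact amlsGamma_strictAntiOn (by positivity) ha₁ hb' hb hb'b

lemma lt_of_alpha_lt {α' γ' : ℝ} (h : IsAmlsBound α c γ) (h' : IsAmlsBound α' c γ')
    (hα : 1 < α) (hc : 1 < c) (hαα' : α < α') : γ' < γ := by
  have hα₀ : 0 < α := by linarith
  have hα₀' : 0 < α' := hα₀.trans hαα'
  have ha₁ : 1 / α < 1 := (div_lt_one hα₀).2 hα
  have haa' : 1 / α' < 1 / α := one_div_lt_one_div_of_lt hα₀ hαα'
  have hb := h.ratio_mem_Ioo hα₀ hc
  have hb' := h'.ratio_mem_Ioo hα₀' hc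
  have hrate : klDiv (1 / α') ((γ' - 1) / (c - 1)) / (1 / α')
      < klDiv (1 / α) ((γ' - 1) / (c - 1)) / (1 / α) :=
    klDiv_div_strictMonoOn hb'.1 ⟨hb'.2.le, haa'.trans ha₁⟩ ⟨(hb'.2.trans haa').le, ha₁⟩ haa'
  rw [h'.klDiv_div_eq_log hα₀', ← h.klDiv_div_eq_log hα₀,
    div_lt_div_iff_of_pos_right (by positivity)] at hrate
  have hb'b := ((klDiv_strictAntiOn ha₁).lt_iff_gt (Ioo_subset_Ioc_self hb)
    ⟨hb'.1, (hb'.2.trans haa').le⟩).1 hrate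
  linarith [(div_lt_div_iff_of_pos_right (by linarith : (0 : ℝ) < c - 1)).1 hb'b]

end IsAmlsBound

/-- Monotonicity of `amlsbound`: for fixed `α > 1` the implicitly defined quantity is
strictly increasing in `c`, and for fixed `c > 1` it is strictly decreasing in `α`. -/
theorem stmt5 (α : ℝ) (hα : 1 < α) :
    (∀ c c' γ γ' : ℝ, 1 < c → c < c' →
      1 < γ → γ < 1 + (c - 1) / α →
      klDiv (1 / α) ((γ - 1) / (c - 1)) = Real.log c / α →
      1 < γ' → γ' < 1 + (c' - 1) / α →
      klDiv (1 / α) ((γ' - 1) / (c' - 1)) = Real.log c' / α →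
      γ < γ') ∧
    (∀ c α' γ γ' : ℝ, 1 < c → α < α' →
      1 < γ → γ < 1 + (c - 1) / α →
      klDiv (1 / α) ((γ - 1) / (c - 1)) = Real.log c / α →
      1 < γ' → γ' < 1 + (c - 1) / α' →
      klDiv (1 / α') ((γ' - 1) / (c - 1)) = Real.log c / α' →
      γ' < γ) :=
  ⟨fun _ _ _ _ hc hcc' hγ₁ hγ₂ h hγ₁' hγ₂' h' =>
    IsAmlsBound.lt_of_c_lt ⟨hγ₁, hγ₂, h⟩ ⟨hγ₁', hγ₂', h'⟩ hα hc hcc',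
   fun _ _ _ _ hc hαα' hγ₁ hγ₂ h hγ₁' hγ₂' h' =>
    IsAmlsBound.lt_of_alpha_lt ⟨hγ₁, hγ₂, h⟩ ⟨hγ₁', hγ₂', h'⟩ hα hc hαα'⟩
end
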